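/- arXiv:2005.11301 — 5 statements merged into one kernel-verified Lean document; each statement's English description precedes it below -/
import Mathlib

section
/- For the tridiagonal antihermitian N×N matrix k with superdiagonal c_1,...,c_{N-1}, the coefficient of x^{N-2k} in det(x·I - k) equals ∑ |c_{j_1}|²···|c_{j_k}|², summed over indices 1 ≤ j_1 < j_2 < ... < j_k ≤ N-1 with j_{i+1} - j_i ≥ 2 for every i; all coefficients of x^m with m not congruent to N mod 2 vanish. -/
/-!
Expanding `det (X - K)` along its last row, where only two entries survive, gives the continuant
recurrence `p (n + 2) = X * p (n + 1) + |c (n + 1)|² * p n`, since the two off-diagonal entries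
multiply to `-|c (n + 1)|²`. Splitting the subsets of `{1, …, n + 1}` with gaps at least 2
according to whether they contain `n + 1` shows that `∑ S, (∏ j ∈ S, |c j|²) X ^ (n - 2 #S)` satisfies the same
recurrence, with the same initial values `1` and `X`.
-/

open Matrix Polynomial Finset

/-- The `N×N` tridiagonal antihermitian matrix with superdiagonal `c₁,…,c_{N-1}`
(1-indexed) and subdiagonal `-c̄₁,…,-c̄_{N-1}`. -/
def triK (c : ℕ → ℂ) (n : ℕ) : Matrix (Fin n) (Fin n) ℂ := fun i j =>
  if (i : ℕ) + 1 = (j : ℕ) then c ((i : ℕ) + 1)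
  else if (j : ℕ) + 1 = (i : ℕ) then -(starRingEnd ℂ) (c ((j : ℕ) + 1))
  else 0

namespace Matrix

variable {R : Type*} [CommRing R]

def leadingBlock (M : Matrix ℕ ℕ R) (n : ℕ) : Matrix (Fin n) (Fin n) R :=
  M.submatrix Fin.val Fin.val

def IsTridiagonal (M : Matrix ℕ ℕ R) : Prop :=
  ∀ ⦃i j : ℕ⦄, i + 1 < j ∨ j + 1 < i → M i j = 0

theorem IsTridiagonal.det_leadingBlock_add_two {M : Matrix ℕ ℕ R} (hM : M.IsTridiagonal)
    (n : ℕ) :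
    (M.leadingBlock (n + 2)).det = M (n + 1) (n + 1) * (M.leadingBlock (n + 1)).det -
      M (n + 1) n * M n (n + 1) * (M.leadingBlock n).det := by
  set A := M.leadingBlock (n + 2)
  set B := A.submatrix (Fin.last (n + 1)).succAbove (Fin.last n).castSucc.succAbove
  have hB : B.det = M n (n + 1) * (M.leadingBlock n).det := by
    rw [det_succ_column B (Fin.last n), Fintype.sum_eq_single (Fin.last n)]
    · have hminor : B.submatrix (Fin.last n).succAbove (Fin.last n).succAbove =
          M.leadingBlock n := by
        ext i j
        simp [B, A, leadingBlock, Fin.succAbove_last,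
          Fin.succAbove_castSucc_of_lt _ _ (Fin.castSucc_lt_last j)]
      rw [hminor, ← two_mul, pow_mul, neg_one_sq, one_pow, one_mul]
      simp [B, A, leadingBlock, Fin.succAbove_last]
    · intro i hi
      have hi' : (i : ℕ) < n := Fin.val_lt_last hi
      have : B i (Fin.last n) = 0 := hM (by simp [Fin.succAbove_last]; omega)
      rw [this, mul_zero, zero_mul]
  rw [det_succ_row A (Fin.last (n + 1)),
    Fintype.sum_eq_add (Fin.last (n + 1)) (Fin.last n).castSucc]
  · have hdiag : A.submatrix (Fin.last (n + 1)).succAbove (Fin.last (n + 1)).succAbove =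
        M.leadingBlock (n + 1) := by
      ext i j
      simp [A, leadingBlock, Fin.succAbove_last]
    rw [hdiag, hB]
    have hodd : Odd ((Fin.last (n + 1) : ℕ) + ((Fin.last n).castSucc : ℕ)) := by
      simp only [Fin.val_last, Fin.val_castSucc]; exact ⟨n, by ring⟩
    rw [← two_mul, pow_mul, neg_one_sq, one_pow, one_mul, hodd.neg_one_pow]
    simp only [A, leadingBlock, submatrix_apply, Fin.val_last, Fin.val_castSucc]
    ring
  · exact (Fin.castSucc_lt_last _).ne'
  · rintro j ⟨hj, hj'⟩
    have := Fin.val_lt_last hj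
    have : (j : ℕ) ≠ n := fun h => hj' (Fin.ext h)
    have : A (Fin.last (n + 1)) j = 0 := hM (by simp; omega)
    rw [this, mul_zero, zero_mul]

theorem charmatrix_leadingBlock (M : Matrix ℕ ℕ R) (n : ℕ) :
    (M.leadingBlock n).charmatrix = (diagonal (fun _ => X) - M.map C).leadingBlock n := by
  ext i j
  rcases eq_or_ne i j with rfl | hij
  · simp [leadingBlock]
  · simp [leadingBlock, hij, Fin.val_injective.ne hij]

theorem IsTridiagonal.charpoly_leadingBlock_add_two {M : Matrix ℕ ℕ R} (hM : M.IsTridiagonal)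
    (n : ℕ) :
    (M.leadingBlock (n + 2)).charpoly = (X - C (M (n + 1) (n + 1))) *
      (M.leadingBlock (n + 1)).charpoly - C (M (n + 1) n * M n (n + 1)) *
      (M.leadingBlock n).charpoly := by
  have hX : (diagonal (fun _ => (X : R[X])) - M.map C).IsTridiagonal := fun i j hij => by
    have hne : i ≠ j := by omega
    simp [hne, hM hij]
  simp only [charpoly, charmatrix_leadingBlock, hX.det_leadingBlock_add_two]
  simp

end Matrix

def IsSpaced (S : Finset ℕ) : Prop := ∀ a ∈ S, ∀ b ∈ S, a < b → a + 2 ≤ b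

instance : DecidablePred IsSpaced := fun S => by unfold IsSpaced; infer_instance

theorem IsSpaced.mono {S T : Finset ℕ} (hS : IsSpaced S) (hTS : T ⊆ S) : IsSpaced T :=
  fun a ha b hb hab => hS a (hTS ha) b (hTS hb) hab

theorem isSpaced_insert {T : Finset ℕ} {b : ℕ} (hT : ∀ a ∈ T, a + 2 ≤ b) :
    IsSpaced (insert b T) ↔ IsSpaced T := by
  refine ⟨fun h => h.mono (subset_insert b T), fun h a ha a' ha' haa' => ?_⟩
  rcases mem_insert.mp ha with rfl | haT <;> rcases mem_insert.mp ha' with rfl | haT'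
  · omega
  · have := hT a' haT'; omega
  · exact hT a haT
  · exact h a haT a' haT' haa'

def spacedSubsets (n : ℕ) : Finset (Finset ℕ) := (Icc 1 n).powerset.filter IsSpaced

theorem mem_spacedSubsets {S : Finset ℕ} {n : ℕ} :
    S ∈ spacedSubsets n ↔ S ⊆ Icc 1 n ∧ IsSpaced S := by
  rw [spacedSubsets, mem_filter, mem_powerset]

theorem spacedSubsets_zero : spacedSubsets 0 = {∅} := by decide

theorem spacedSubsets_succ (m : ℕ) :
    spacedSubsets (m + 1) =
      spacedSubsets m ∪ (spacedSubsets (m - 1)).image (insert (m + 1)) := by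
  ext S
  simp only [mem_union, mem_image, mem_spacedSubsets]
  constructor
  · rintro ⟨hS, hsp⟩
    by_cases hm : m + 1 ∈ S
    · refine Or.inr ⟨S.erase (m + 1), ⟨fun a ha => ?_, hsp.mono (erase_subset _ _)⟩,
        insert_erase hm⟩
      have ha1 := mem_Icc.mp (hS (mem_of_mem_erase ha))
      have := hsp a (mem_of_mem_erase ha) (m + 1) hm (by have := ne_of_mem_erase ha; omega)
      exact mem_Icc.mpr ⟨ha1.1, by omega⟩
    · refine Or.inl ⟨fun a ha => ?_, hsp⟩
      have := mem_Icc.mp (hS ha)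
      have : a ≠ m + 1 := fun h => hm (h ▸ ha)
      exact mem_Icc.mpr ⟨by omega, by omega⟩
  · rintro (⟨hS, hsp⟩ | ⟨T, ⟨hT, hsp⟩, rfl⟩)
    · exact ⟨hS.trans (Icc_subset_Icc_right m.le_succ), hsp⟩
    · have hT' : ∀ a ∈ T, 1 ≤ a ∧ a + 2 ≤ m + 1 := fun a ha => by
        have := mem_Icc.mp (hT ha); omega
      refine ⟨insert_subset (by simp) fun a ha => ?_,
        (isSpaced_insert fun a ha => (hT' a ha).2).mpr hsp⟩
      have := hT' a ha
      exact mem_Icc.mpr ⟨this.1, by omega⟩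

theorem sum_spacedSubsets_succ {M : Type*} [AddCommMonoid M] (f : Finset ℕ → M) (m : ℕ) :
    ∑ S ∈ spacedSubsets (m + 1), f S =
      ∑ S ∈ spacedSubsets m, f S + ∑ T ∈ spacedSubsets (m - 1), f (insert (m + 1) T) := by
  have hnotMem : ∀ T ∈ spacedSubsets (m - 1), m + 1 ∉ T := fun T hT hm => by
    have := mem_Icc.mp ((mem_spacedSubsets.mp hT).1 hm); omega
  rw [spacedSubsets_succ, sum_union, sum_image]
  · exact fun T hT T' hT' h => by
      rw [← erase_insert (hnotMem T hT), h, erase_insert (hnotMem T' hT')]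
  · refine disjoint_left.mpr fun S hS hS' => ?_
    obtain ⟨T, -, rfl⟩ := mem_image.mp hS'
    have := mem_Icc.mp ((mem_spacedSubsets.mp hS).1 (mem_insert_self (m + 1) T))
    omega

theorem two_mul_card_le_of_mem_spacedSubsets {S : Finset ℕ} {n : ℕ}
    (hS : S ∈ spacedSubsets n) : 2 * #S ≤ n + 1 := by
  induction n using Nat.strong_induction_on generalizing S with
  | _ n ih =>
    rcases n with _ | m
    · rw [card_eq_zero.mpr (subset_empty.mp (mem_spacedSubsets.mp hS).1)]; omega
    rw [spacedSubsets_succ, mem_union, mem_image] at hS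
    rcases hS with hS | ⟨T, hT, rfl⟩
    · have := ih m (by omega) hS; omega
    · have := ih (m - 1) (by omega) hT
      have := card_insert_le (m + 1) T
      omega

section SpacedPoly

variable {R : Type*} [CommRing R] (w : ℕ → R)

-- At `n = 0` the index `n - 1` truncates to `0`, which still gives `{∅}`; the exponent never
-- truncates, by `two_mul_card_le_of_mem_spacedSubsets`.
noncomputable def spacedPoly (n : ℕ) : R[X] :=
  ∑ S ∈ spacedSubsets (n - 1), C (∏ j ∈ S, w j) * X ^ (n - 2 * #S)

theorem spacedPoly_zero : spacedPoly w 0 = 1 := by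
  simp [spacedPoly, spacedSubsets_zero]

theorem spacedPoly_one : spacedPoly w 1 = X := by
  simp [spacedPoly, spacedSubsets_zero]

theorem spacedPoly_add_two (n : ℕ) :
    spacedPoly w (n + 2) = X * spacedPoly w (n + 1) + C (w (n + 1)) * spacedPoly w n := by
  rw [spacedPoly, show n + 2 - 1 = n + 1 from rfl, sum_spacedSubsets_succ]
  congr 1
  · rw [spacedPoly, Nat.add_sub_cancel, mul_sum]
    refine sum_congr rfl fun S hS => ?_
    have := two_mul_card_le_of_mem_spacedSubsets hS
    rw [show n + 2 - 2 * #S = n + 1 - 2 * #S + 1 by omega, pow_succ]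
    ring
  · rw [spacedPoly, mul_sum]
    refine sum_congr rfl fun T hT => ?_
    have hm : n + 1 ∉ T := fun hm => by
      have := mem_Icc.mp ((mem_spacedSubsets.mp hT).1 hm); omega
    have := two_mul_card_le_of_mem_spacedSubsets hT
    rw [prod_insert hm, card_insert_of_notMem hm, C_mul,
      show n + 2 - 2 * (#T + 1) = n - 2 * #T by omega]
    ring

theorem coeff_spacedPoly_sub_two_mul {n k : ℕ} (hk : 2 * k ≤ n) :
    (spacedPoly w n).coeff (n - 2 * k) =
      ∑ S ∈ (powersetCard k (Icc 1 (n - 1))).filter IsSpaced, ∏ j ∈ S, w j := by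
  rw [spacedPoly, finsetSum_coeff]
  simp only [coeff_C_mul, coeff_X_pow, mul_ite, mul_one, mul_zero]
  rw [← sum_filter]
  refine sum_congr (ext fun S => ?_) fun _ _ => rfl
  simp only [mem_filter, mem_spacedSubsets, mem_powersetCard]
  constructor
  · rintro ⟨⟨hS, hsp⟩, hcard⟩
    have := two_mul_card_le_of_mem_spacedSubsets (mem_spacedSubsets.mpr ⟨hS, hsp⟩)
    exact ⟨⟨hS, by omega⟩, hsp⟩
  · rintro ⟨⟨hS, rfl⟩, hsp⟩
    exact ⟨⟨hS, hsp⟩, rfl⟩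

theorem coeff_spacedPoly_of_mod_two_ne {n m : ℕ} (hm : m % 2 ≠ n % 2) :
    (spacedPoly w n).coeff m = 0 := by
  rw [spacedPoly, finsetSum_coeff]
  refine sum_eq_zero fun S hS => ?_
  have := two_mul_card_le_of_mem_spacedSubsets hS
  rw [coeff_C_mul, coeff_X_pow, if_neg (by omega), mul_zero]

end SpacedPoly

def triKInf (c : ℕ → ℂ) : Matrix ℕ ℕ ℂ := fun i j =>
  if i + 1 = j then c (i + 1) else if j + 1 = i then -(starRingEnd ℂ) (c (j + 1)) else 0

theorem triK_eq_leadingBlock (c : ℕ → ℂ) (n : ℕ) : triK c n = (triKInf c).leadingBlock n := rfl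

theorem isTridiagonal_triKInf (c : ℕ → ℂ) : (triKInf c).IsTridiagonal := fun i j hij => by
  rw [triKInf, if_neg (by omega), if_neg (by omega)]

theorem charpoly_triK_add_two (c : ℕ → ℂ) (n : ℕ) :
    (triK c (n + 2)).charpoly =
      X * (triK c (n + 1)).charpoly + C ((‖c (n + 1)‖ ^ 2 : ℝ) : ℂ) * (triK c n).charpoly := by
  simp only [triK_eq_leadingBlock, (isTridiagonal_triKInf c).charpoly_leadingBlock_add_two]
  have hconj : triKInf c (n + 1) n * triKInf c n (n + 1) = -((‖c (n + 1)‖ ^ 2 : ℝ) : ℂ) := by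
    have hsub : triKInf c (n + 1) n = -(starRingEnd ℂ) (c (n + 1)) := by
      rw [triKInf, if_neg (by omega), if_pos rfl]
    have hsup : triKInf c n (n + 1) = c (n + 1) := if_pos rfl
    rw [hsub, hsup, neg_mul, Complex.conj_mul', Complex.ofReal_pow]
  rw [hconj]
  simp [triKInf]

theorem charpoly_triK (c : ℕ → ℂ) (n : ℕ) :
    (triK c n).charpoly = spacedPoly (fun j => ((‖c j‖ ^ 2 : ℝ) : ℂ)) n := by
  induction n using Nat.twoStepInduction with
  | zero => rw [spacedPoly_zero]; exact charpoly_isEmpty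
  | one => rw [spacedPoly_one, charpoly, det_fin_one, charmatrix_apply_eq]; simp [triK]
  | more n ih₀ ih₁ => rw [charpoly_triK_add_two, spacedPoly_add_two, ih₀, ih₁]

/-- The coefficient of `x^{N-2k}` in `det(x·I - k)` is
`∑ |c_{j₁}|²···|c_{j_k}|²` over `1 ≤ j₁ ≪ j₂ ≪ … ≪ j_k ≤ N-1`
(where `j ≪ j'` means `j' - j ≥ 2`), and the coefficients of `x^m`
with `m ≢ N (mod 2)` vanish. -/
theorem charpoly_triK_coeffs (c : ℕ → ℂ) (N : ℕ) :
    (∀ k : ℕ, 2 * k ≤ N →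
      ((triK c N).charpoly).coeff (N - 2 * k) =
        ∑ S ∈ (Finset.powersetCard k (Finset.Icc 1 (N - 1))).filter
            (fun S => ∀ a ∈ S, ∀ b ∈ S, a < b → a + 2 ≤ b),
          ∏ j ∈ S, ((‖c j‖ ^ 2 : ℝ) : ℂ)) ∧
    (∀ m : ℕ, m % 2 ≠ N % 2 → ((triK c N).charpoly).coeff m = 0) := by
  rw [charpoly_triK]
  exact ⟨fun k hk => coeff_spacedPoly_sub_two_mul _ hk,
    fun m hm => coeff_spacedPoly_of_mod_two_ne _ hm⟩
end

section
/- For h' = diag(ih_1,...,ih_N) a traceless diagonal antihermitian matrix and k the tridiagonal antihermitian matrix with superdiagonal c_j, one has Tr([h',k]·[h',k]) = -2∑_{j=1}^{N-1} (h_j - h_{j+1})² |c_j|². -/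
open Matrix Finset

/-!
The commutator of a diagonal matrix `D = diag(d)` with `K` has entries `(d_i - d_j) K_ij`, so
`Tr([D,K]²) = -∑_{i,j} (d_i - d_j)² K_ij K_ji`. For tridiagonal `K` only the pairs `|i - j| = 1`
survive, each contributing `K_{j,j+1} K_{j+1,j} = -|c_j|²` twice, and for `d_j = i h_j` the factor
`(d_j - d_{j+1})²` equals `-(h_j - h_{j+1})²`.
-/

theorem Finset.sum_Icc_one_sub_one_eq_sum_range {M : Type*} [AddCommMonoid M] (N : ℕ)
    (g : ℕ → M) : ∑ j ∈ Icc 1 (N - 1), g j = ∑ a ∈ range (N - 1), g (a + 1) := by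
  rw [range_eq_Ico, sum_Ico_add' g 0 (N - 1) 1]
  rfl

section Adjacent

variable {M : Type*} [AddCommMonoid M] (f : ℕ → ℕ → M)

theorem Finset.sum_range_succ_sum_range_succ_of_adjacent
    (hf : ∀ a b, a + 1 ≠ b → b + 1 ≠ a → f a b = 0) (m : ℕ) :
    ∑ a ∈ range (m + 1), ∑ b ∈ range (m + 1), f a b =
      ∑ a ∈ range m, (f a (a + 1) + f (a + 1) a) := by
  induction m with
  | zero => simp [hf 0 0 one_ne_zero one_ne_zero]
  | succ m ih =>
    have last_col : ∑ a ∈ range (m + 1), f a (m + 1) = f m (m + 1) :=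
      sum_eq_single_of_mem m (self_mem_range_succ m) fun a ha hne => hf a (m + 1)
        (by omega) (by rw [mem_range] at ha; omega)
    have last_row : ∑ b ∈ range (m + 1), f (m + 1) b = f (m + 1) m :=
      sum_eq_single_of_mem m (self_mem_range_succ m) fun b hb hne => hf (m + 1) b
        (by rw [mem_range] at hb; omega) (by omega)
    rw [sum_range_succ _ (m + 1), sum_range_succ (f (m + 1)), last_row,
      hf (m + 1) (m + 1) (by omega) (by omega)]
    simp only [sum_range_succ (f _) (m + 1)]
    rw [sum_add_distrib, ih, last_col, sum_range_succ, add_zero, add_assoc]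

theorem Finset.sum_range_sum_range_of_adjacent
    (hf : ∀ a b, a + 1 ≠ b → b + 1 ≠ a → f a b = 0) (N : ℕ) :
    ∑ a ∈ range N, ∑ b ∈ range N, f a b = ∑ a ∈ range (N - 1), (f a (a + 1) + f (a + 1) a) := by
  cases N with
  | zero => simp
  | succ m => exact sum_range_succ_sum_range_succ_of_adjacent f hf m

end Adjacent

section Commutator

variable {n R : Type*} [Fintype n] [DecidableEq n] [CommRing R] (d : n → R) (A : Matrix n n R)

theorem Matrix.diagonal_mul_sub_mul_diagonal :
    diagonal d * A - A * diagonal d = of fun i j => (d i - d j) * A i j := by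
  ext i j
  simp only [sub_apply, diagonal_mul, mul_diagonal, of_apply]
  ring

theorem Matrix.trace_sq_diagonal_mul_sub_mul_diagonal :
    trace ((diagonal d * A - A * diagonal d) * (diagonal d * A - A * diagonal d)) =
      -∑ i, ∑ j, (d i - d j) ^ 2 * (A i j * A j i) := by
  simp only [diagonal_mul_sub_mul_diagonal, trace, diag_apply, mul_apply, of_apply,
    ← sum_neg_distrib]
  refine sum_congr rfl fun i _ => sum_congr rfl fun j _ => ?_
  ring

end Commutator

def triKEntry (c : ℕ → ℂ) (a b : ℕ) : ℂ :=
  if a + 1 = b then c (a + 1) else if b + 1 = a then -(starRingEnd ℂ) (c (b + 1)) else 0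

theorem triK_apply (c : ℕ → ℂ) (n : ℕ) (i j : Fin n) : triK c n i j = triKEntry c i j := rfl

theorem triKEntry_of_not_adjacent (c : ℕ → ℂ) {a b : ℕ} (hab : a + 1 ≠ b) (hba : b + 1 ≠ a) :
    triKEntry c a b = 0 := by
  simp [triKEntry, hab, hba]

theorem triKEntry_mul_triKEntry_succ (c : ℕ → ℂ) (a : ℕ) :
    triKEntry c a (a + 1) * triKEntry c (a + 1) a = -((‖c (a + 1)‖ ^ 2 : ℝ) : ℂ) := by
  rw [triKEntry, triKEntry, if_pos rfl, if_neg (by omega), if_pos rfl, mul_neg, Complex.mul_conj,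
    Complex.normSq_eq_norm_sq]

theorem trace_sq_diagonal_mul_triK_sub_triK_mul_diagonal (c : ℕ → ℂ) (N : ℕ) (d : ℕ → ℂ) :
    trace ((diagonal (fun i : Fin N => d i) * triK c N -
          triK c N * diagonal (fun i : Fin N => d i)) *
        (diagonal (fun i : Fin N => d i) * triK c N -
          triK c N * diagonal (fun i : Fin N => d i))) =
      2 * ∑ a ∈ range (N - 1), (d a - d (a + 1)) ^ 2 * ((‖c (a + 1)‖ ^ 2 : ℝ) : ℂ) := by
  set F : ℕ → ℕ → ℂ := fun a b => (d a - d b) ^ 2 * (triKEntry c a b * triKEntry c b a)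
  have hF : ∀ a b, a + 1 ≠ b → b + 1 ≠ a → F a b = 0 := fun a b hab hba => by
    simp [F, triKEntry_of_not_adjacent c hab hba]
  rw [trace_sq_diagonal_mul_sub_mul_diagonal]
  change -∑ i : Fin N, ∑ j : Fin N, F i j = _
  simp only [Fin.sum_univ_eq_sum_range (F _),
    Fin.sum_univ_eq_sum_range (fun a => ∑ b ∈ range N, F a b)]
  rw [sum_range_sum_range_of_adjacent F hF, mul_sum, ← sum_neg_distrib]
  refine sum_congr rfl fun a _ => ?_
  simp only [F, mul_comm (triKEntry c (a + 1) a), triKEntry_mul_triKEntry_succ]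
  ring

theorem trace_comm_diag_triK_sq_general (N : ℕ) (h : ℕ → ℝ) (c : ℕ → ℂ)
    (h' : Matrix (Fin N) (Fin N) ℂ)
    (hh' : h' = Matrix.diagonal (fun i : Fin N => ((h ((i : ℕ) + 1) : ℝ) : ℂ) * Complex.I)) :
    Matrix.trace ((h' * triK c N - triK c N * h') * (h' * triK c N - triK c N * h')) =
      -2 * ∑ j ∈ Finset.Icc 1 (N - 1),
        (((h j - h (j + 1)) ^ 2 * ‖c j‖ ^ 2 : ℝ) : ℂ) := by
  subst hh'
  rw [trace_sq_diagonal_mul_triK_sub_triK_mul_diagonal c N (fun a => (h (a + 1) : ℂ) * Complex.I),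
    sum_Icc_one_sub_one_eq_sum_range, mul_sum, mul_sum]
  refine sum_congr rfl fun a _ => ?_
  push_cast
  linear_combination (2 * (h (a + 1) - h (a + 1 + 1) : ℂ) ^ 2 * ‖c (a + 1)‖ ^ 2) * Complex.I_sq

/-- For `h' = diag(ih₁,…,ih_N)` traceless and `k` tridiagonal antihermitian,
`Tr([h',k]·[h',k]) = -2 ∑_{j=1}^{N-1} (h_j - h_{j+1})² |c_j|²`. -/
theorem trace_comm_diag_triK_sq (N : ℕ) (h : ℕ → ℝ) (c : ℕ → ℂ)
    (htraceless : ∑ j ∈ Finset.Icc 1 N, h j = 0)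
    (h' : Matrix (Fin N) (Fin N) ℂ)
    (hh' : h' = Matrix.diagonal (fun i : Fin N => ((h ((i : ℕ) + 1) : ℝ) : ℂ) * Complex.I)) :
    Matrix.trace ((h' * triK c N - triK c N * h') * (h' * triK c N - triK c N * h')) =
      -2 * ∑ j ∈ Finset.Icc 1 (N - 1),
        (((h j - h (j + 1)) ^ 2 * ‖c j‖ ^ 2 : ℝ) : ℂ) :=
  trace_comm_diag_triK_sq_general N h c h' hh'
end

section
/- Given signs ε_j ∈ {+1,-1} and a > 0, suppose h' = diag(ih_1,...,ih_N) with h_j - h_{j+1} = ε_j a for all j. Set x = e^{-h'r} k e^{h'r}. Then Tr([x,k]²) = -8 sin²(ar)·(∑_{j=1}^{N-1}|c_j|⁴ + ∑_{j=1}^{N-2}|c_j|²|c_{j+1}|²·(1 - 3ε_jε_{j+1})/2). -/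
/-!
Conjugating `k` by the diagonal unitary `e^{h'r}` multiplies its entry `(j, j+1)` by the phase
`e^{-iθ_j}`, `θ_j = r (h_j - h_{j+1}) = ε_j a r`, so `x` is again of the form `triK`. The commutator
of two tridiagonal matrices with zero diagonal lives on the diagonal and the second off-diagonals,
so the trace of its square is `∑ (D_j - D_{j+1})² + 2 ∑ u_j v_j`. For phase-twisted entries
`D_j = -2i |c_j|² sin θ_j` and `u_j v_j = 2 |c_j|² |c_{j+1}|² (cos (θ_j - θ_{j+1}) - 1)`; with
`θ_j = ε_j a r` everything becomes a multiple of `sin² (a r)`.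
-/

open Matrix Finset

open ComplexConjugate

lemma sum_fin_eq_dite_of_val_ne {M : Type*} [AddCommMonoid M] {n : ℕ} (f : Fin n → M) (t : ℕ)
    (hf : ∀ l : Fin n, (l : ℕ) ≠ t → f l = 0) :
    ∑ l, f l = if h : t < n then f ⟨t, h⟩ else 0 := by
  split_ifs with h
  · exact sum_eq_single_of_mem _ (mem_univ _) fun l _ hl => hf l (by simpa [Fin.ext_iff] using hl)
  · exact sum_eq_zero fun l _ => hf l (by omega)

lemma sum_Icc_one_eq_sum_range {M : Type*} [AddCommMonoid M] (f : ℕ → M) (n : ℕ) :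
    ∑ j ∈ Icc 1 n, f j = ∑ i ∈ range n, f (i + 1) := by
  rw [range_eq_Ico, sum_Ico_add', ← Ico_add_one_right_eq_Icc, zero_add]

lemma sum_sq_sub_succ_truncated {R : Type*} [CommRing R] (D : ℕ → R) (n : ℕ) :
    ∑ i ∈ range n, ((if 1 ≤ i then D i else 0) - (if i + 1 < n then D (i + 1) else 0)) ^ 2 =
      2 * ∑ j ∈ Icc 1 (n - 1), D j ^ 2 - 2 * ∑ j ∈ Icc 1 (n - 2), D j * D (j + 1) := by
  obtain _ | _ | m := n
  · simp
  · simp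
  have hinner : ∀ k ∈ range m,
      ((if 1 ≤ k + 1 then D (k + 1) else 0) - (if k + 1 + 1 < m + 2 then D (k + 1 + 1) else 0)) ^ 2 =
        D (k + 1) ^ 2 + D (k + 2) ^ 2 - 2 * (D (k + 1) * D (k + 2)) := by
    intro k hk
    rw [if_pos (by omega), if_pos (by rw [mem_range] at hk; omega)]
    ring
  have hsq₁ := sum_range_succ (fun k => D (k + 1) ^ 2) m
  have hsq₂ : ∑ k ∈ range (m + 1), D (k + 1) ^ 2 = ∑ k ∈ range m, D (k + 2) ^ 2 + D 1 ^ 2 :=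
    sum_range_succ' _ _
  rw [sum_range_succ', sum_range_succ, sum_congr rfl hinner, sum_sub_distrib, sum_add_distrib,
    ← mul_sum, sum_Icc_one_eq_sum_range, sum_Icc_one_eq_sum_range,
    show m + 2 - 1 = m + 1 by omega, show m + 2 - 2 = m by omega]
  simp only [if_pos (by omega : 1 ≤ m + 1), if_neg (by omega : ¬ m + 1 + 1 < m + 2),
    if_neg (by omega : ¬ 1 ≤ 0), if_pos (by omega : 0 + 1 < m + 2), zero_add]
  linear_combination -hsq₁ - hsq₂

section Pentadiag

variable {R : Type*} [CommRing R]

def pentadiag (d u v : ℕ → R) (n : ℕ) : Matrix (Fin n) (Fin n) R := fun i j =>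
  if (i : ℕ) = j then d i
  else if (i : ℕ) + 2 = j then u i
  else if (j : ℕ) + 2 = i then v j
  else 0

lemma pentadiag_sub (d u v d' u' v' : ℕ → R) (n : ℕ) :
    pentadiag d u v n - pentadiag d' u' v' n = pentadiag (d - d') (u - u') (v - v') n := by
  ext i j
  simp only [pentadiag, Matrix.sub_apply, Pi.sub_apply]
  split_ifs <;> simp

lemma trace_pentadiag_mul_self (d u v : ℕ → R) (n : ℕ) :
    trace (pentadiag d u v n * pentadiag d u v n) =
      ∑ i ∈ range n, d i ^ 2 + 2 * ∑ p ∈ range (n - 2), u p * v p := by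
  set P := pentadiag d u v n
  let B : Fin n → Fin n → R := fun i j => if (j : ℕ) = i + 2 then u i * v i else 0
  have hentry : ∀ i j : Fin n, P i j * P j i =
      (if (j : ℕ) = i then d i ^ 2 else 0) + (B i j + B j i) := by
    intro i j
    simp only [P, B, pentadiag]
    split_ifs <;> first | omega | grind
  have hdiag : ∀ i : Fin n, ∑ j : Fin n, (if (j : ℕ) = i then d i ^ 2 else 0) = d i ^ 2 := by
    intro i
    rw [sum_fin_eq_dite_of_val_ne _ i fun _ h => if_neg h, dif_pos i.isLt, if_pos rfl]
  have hband : ∑ i : Fin n, ∑ j : Fin n, B i j = ∑ p ∈ range (n - 2), u p * v p := by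
    have hrow : ∀ i : Fin n, ∑ j : Fin n, B i j = if (i : ℕ) + 2 < n then u i * v i else 0 := by
      intro i
      rw [sum_fin_eq_dite_of_val_ne _ (i + 2) fun _ h => if_neg h]
      split_ifs <;> simp_all [B]
    rw [sum_congr rfl fun i _ => hrow i,
      Fin.sum_univ_eq_sum_range (fun p => if p + 2 < n then u p * v p else 0), ← sum_filter]
    congr 1
    ext p
    simp only [mem_filter, mem_range]
    omega
  calc trace (P * P) = ∑ i : Fin n, ∑ j : Fin n, P i j * P j i := by
        simp [Matrix.trace, Matrix.mul_apply]
    _ = ∑ i ∈ range n, d i ^ 2 + 2 * ∑ p ∈ range (n - 2), u p * v p := by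
        simp only [hentry, sum_add_distrib, hdiag]
        rw [sum_comm (f := fun i j => B j i), hband, ← two_mul,
          Fin.sum_univ_eq_sum_range (fun i => d i ^ 2)]

end Pentadiag

lemma triK_mul_triK (b c : ℕ → ℂ) (n : ℕ) :
    triK b n * triK c n =
      pentadiag (fun i => -((if i + 1 < n then b (i + 1) * conj (c (i + 1)) else 0)
          + (if 1 ≤ i then conj (b i) * c i else 0)))
        (fun p => b (p + 1) * c (p + 2)) (fun p => conj (b (p + 2)) * conj (c (p + 1))) n := by
  ext i j
  have hterm : ∀ l : Fin n, triK b n i l * triK c n l j =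
      (if (l : ℕ) = i + 1 then b (i + 1) * triK c n l j else 0)
        + (if (l : ℕ) + 1 = i then -conj (b i) * triK c n l j else 0) := by
    intro l
    simp only [triK]
    split_ifs <;> first | omega | grind
  rw [mul_apply, sum_congr rfl fun l _ => hterm l, sum_add_distrib,
    sum_fin_eq_dite_of_val_ne _ (i + 1) fun _ h => if_neg h,
    sum_fin_eq_dite_of_val_ne _ (i - 1) fun _ h => if_neg (by omega)]
  simp only [triK, pentadiag]
  split_ifs <;> first | omega | grind

lemma triK_mul_triK_sub_triK_mul_triK (b c : ℕ → ℂ) (n : ℕ) :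
    triK b n * triK c n - triK c n * triK b n =
      pentadiag (fun i => (if 1 ≤ i then conj (c i) * b i - conj (b i) * c i else 0)
          - (if i + 1 < n then conj (c (i + 1)) * b (i + 1) - conj (b (i + 1)) * c (i + 1) else 0))
        (fun p => b (p + 1) * c (p + 2) - c (p + 1) * b (p + 2))
        (fun p => conj (b (p + 2)) * conj (c (p + 1)) - conj (c (p + 2)) * conj (b (p + 1))) n := by
  rw [triK_mul_triK, triK_mul_triK, pentadiag_sub]
  congr 1
  funext i
  simp only [Pi.sub_apply]
  split_ifs <;> ring

section Phase

open Complex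

lemma exp_ofReal_mul_I_eq (θ : ℝ) : exp (θ * I) = Real.cos θ + Real.sin θ * I := by
  rw [exp_mul_I, ← ofReal_cos, ← ofReal_sin]

lemma exp_neg_ofReal_mul_I_eq (θ : ℝ) : exp (-θ * I) = Real.cos θ - Real.sin θ * I := by
  rw [exp_mul_I, cos_neg, sin_neg, ← ofReal_cos, ← ofReal_sin]
  ring

lemma conj_exp_neg_ofReal_mul_I (θ : ℝ) : conj (exp (-θ * I)) = exp (θ * I) := by
  rw [← exp_conj]
  simp

lemma conj_mul_phase_sub_conj_phase_mul (z : ℂ) (θ : ℝ) :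
    conj z * (z * exp (-θ * I)) - conj (z * exp (-θ * I)) * z =
      ((-2 * ‖z‖ ^ 2 * Real.sin θ : ℝ) : ℂ) * I := by
  rw [map_mul, conj_exp_neg_ofReal_mul_I, exp_ofReal_mul_I_eq, exp_neg_ofReal_mul_I_eq]
  linear_combination (norm := (push_cast; ring)) (-2 * Real.sin θ * I : ℂ) * conj_mul' z

lemma exp_neg_sub_mul_exp_sub (θ θ' : ℝ) :
    (exp (-θ * I) - exp (-θ' * I)) * (exp (θ' * I) - exp (θ * I)) =
      ((2 * (Real.cos (θ - θ') - 1) : ℝ) : ℂ) := by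
  rw [exp_ofReal_mul_I_eq, exp_ofReal_mul_I_eq, exp_neg_ofReal_mul_I_eq, exp_neg_ofReal_mul_I_eq]
  push_cast [Real.cos_sub]
  linear_combination (sin (θ : ℂ) - sin (θ' : ℂ)) ^ 2 * I_sq
    - sin_sq_add_cos_sq (θ : ℂ) - sin_sq_add_cos_sq (θ' : ℂ)

lemma phase_wronskian_mul_conj (z w : ℂ) (θ θ' : ℝ) :
    (z * exp (-θ * I) * w - z * (w * exp (-θ' * I))) *
        (conj (w * exp (-θ' * I)) * conj z - conj w * conj (z * exp (-θ * I))) =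
      ((2 * ‖z‖ ^ 2 * ‖w‖ ^ 2 * (Real.cos (θ - θ') - 1) : ℝ) : ℂ) := by
  calc _ = z * conj z * (w * conj w) *
        ((exp (-θ * I) - exp (-θ' * I)) * (exp (θ' * I) - exp (θ * I))) := by
        simp only [map_mul, conj_exp_neg_ofReal_mul_I]
        ring
    _ = _ := by
        rw [mul_conj', mul_conj', exp_neg_sub_mul_exp_sub]
        push_cast
        ring

lemma exp_neg_smul_diagonal_mul_mul_exp_smul_diagonal {n : Type*} [Fintype n] [DecidableEq n]
    (t : ℂ) (d : n → ℂ) (M : Matrix n n ℂ) :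
    NormedSpace.exp (-t • diagonal d) * M * NormedSpace.exp (t • diagonal d) =
      of fun i j => exp (t * (d j - d i)) * M i j := by
  rw [← diagonal_smul, ← diagonal_smul, exp_diagonal, exp_diagonal]
  ext i j
  simp only [mul_diagonal, diagonal_mul, of_apply, Pi.coe_exp, Pi.smul_apply, smul_eq_mul,
    ← exp_eq_exp_ℂ]
  rw [mul_sub, sub_eq_neg_add, exp_add, ← neg_mul]
  ring

lemma exp_diagonal_conj_triK (c : ℕ → ℂ) (φ : ℕ → ℝ) (r : ℝ) (n : ℕ) :
    NormedSpace.exp (-(r : ℂ) • diagonal fun i : Fin n => (φ (i + 1) : ℂ) * I) * triK c n *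
        NormedSpace.exp ((r : ℂ) • diagonal fun i : Fin n => (φ (i + 1) : ℂ) * I) =
      triK (fun k => c k * exp (-((r * (φ k - φ (k + 1)) : ℝ) : ℂ) * I)) n := by
  rw [exp_neg_smul_diagonal_mul_mul_exp_smul_diagonal]
  ext i j
  simp only [of_apply, triK]
  split_ifs with hij hji
  · rw [← hij]
    push_cast
    ring_nf
  · rw [← hji, map_mul, conj_exp_neg_ofReal_mul_I]
    push_cast
    ring_nf
  · simp

lemma trace_sq_triK_phase_commutator (c b : ℕ → ℂ) (θ : ℕ → ℝ) (n : ℕ)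
    (hb : ∀ k, b k = c k * exp (-θ k * I)) :
    trace ((triK b n * triK c n - triK c n * triK b n) *
        (triK b n * triK c n - triK c n * triK b n)) =
      ((-8 * ∑ j ∈ Icc 1 (n - 1), ‖c j‖ ^ 4 * Real.sin (θ j) ^ 2
        + 4 * ∑ j ∈ Icc 1 (n - 2), ‖c j‖ ^ 2 * ‖c (j + 1)‖ ^ 2 *
            (2 * Real.sin (θ j) * Real.sin (θ (j + 1)) + Real.cos (θ j - θ (j + 1)) - 1) : ℝ) : ℂ) := by
  have hD : ∀ j, conj (c j) * b j - conj (b j) * c j =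
      ((-2 * ‖c j‖ ^ 2 * Real.sin (θ j) : ℝ) : ℂ) * I := fun j => by
    rw [hb, conj_mul_phase_sub_conj_phase_mul]
  have huv : ∀ p, (b (p + 1) * c (p + 2) - c (p + 1) * b (p + 2)) *
      (conj (b (p + 2)) * conj (c (p + 1)) - conj (c (p + 2)) * conj (b (p + 1))) =
      ((2 * ‖c (p + 1)‖ ^ 2 * ‖c (p + 2)‖ ^ 2 * (Real.cos (θ (p + 1) - θ (p + 2)) - 1) : ℝ) : ℂ) :=
    fun p => by rw [hb, hb, phase_wronskian_mul_conj]
  rw [triK_mul_triK_sub_triK_mul_triK, trace_pentadiag_mul_self, sum_sq_sub_succ_truncated]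
  have hshift : ∑ p ∈ range (n - 2), ((2 * ‖c (p + 1)‖ ^ 2 * ‖c (p + 2)‖ ^ 2 *
        (Real.cos (θ (p + 1) - θ (p + 2)) - 1) : ℝ) : ℂ) =
      ∑ j ∈ Icc 1 (n - 2), ((2 * ‖c j‖ ^ 2 * ‖c (j + 1)‖ ^ 2 *
        (Real.cos (θ j - θ (j + 1)) - 1) : ℝ) : ℂ) :=
    (sum_Icc_one_eq_sum_range (fun j => ((2 * ‖c j‖ ^ 2 * ‖c (j + 1)‖ ^ 2 *
      (Real.cos (θ j - θ (j + 1)) - 1) : ℝ) : ℂ)) _).symm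
  simp only [hD, huv, hshift]
  have hdiag : 2 * ∑ j ∈ Icc 1 (n - 1), (((-2 * ‖c j‖ ^ 2 * Real.sin (θ j) : ℝ) : ℂ) * I) ^ 2 =
      ((-8 * ∑ j ∈ Icc 1 (n - 1), ‖c j‖ ^ 4 * Real.sin (θ j) ^ 2 : ℝ) : ℂ) := by
    push_cast
    rw [mul_sum, mul_sum]
    refine sum_congr rfl fun j _ => ?_
    linear_combination 2 * (-2 * (‖c j‖ : ℂ) ^ 2 * sin (θ j : ℂ)) ^ 2 * I_sq
  have hband : -(2 * ∑ j ∈ Icc 1 (n - 2), ((-2 * ‖c j‖ ^ 2 * Real.sin (θ j) : ℝ) : ℂ) * I *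
        (((-2 * ‖c (j + 1)‖ ^ 2 * Real.sin (θ (j + 1)) : ℝ) : ℂ) * I)) +
      2 * ∑ j ∈ Icc 1 (n - 2), ((2 * ‖c j‖ ^ 2 * ‖c (j + 1)‖ ^ 2 *
        (Real.cos (θ j - θ (j + 1)) - 1) : ℝ) : ℂ) =
      ((4 * ∑ j ∈ Icc 1 (n - 2), ‖c j‖ ^ 2 * ‖c (j + 1)‖ ^ 2 *
        (2 * Real.sin (θ j) * Real.sin (θ (j + 1)) + Real.cos (θ j - θ (j + 1)) - 1) : ℝ) : ℂ) := by
    push_cast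
    rw [mul_sum, mul_sum, mul_sum, ← sum_neg_distrib, ← sum_add_distrib]
    refine sum_congr rfl fun j _ => ?_
    linear_combination
      -8 * (‖c j‖ : ℂ) ^ 2 * (‖c (j + 1)‖ : ℂ) ^ 2 * sin (θ j : ℂ) * sin (θ (j + 1) : ℂ) * I_sq
  rw [ofReal_add]
  linear_combination hdiag + hband

end Phase

theorem trace_comm_x_k_sq_general (N : ℕ) (a r : ℝ)
    (h : ℕ → ℝ) (ε : ℕ → ℝ) (c : ℕ → ℂ)
    (hε : ∀ j ∈ Finset.Icc 1 (N - 1), ε j = 1 ∨ ε j = -1)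
    (hdiff : ∀ j ∈ Finset.Icc 1 (N - 1), h j - h (j + 1) = ε j * a)
    (h' x : Matrix (Fin N) (Fin N) ℂ)
    (hh' : h' = Matrix.diagonal (fun i : Fin N => ((h ((i : ℕ) + 1) : ℝ) : ℂ) * Complex.I))
    (hx : x = NormedSpace.exp (-(r : ℂ) • h') * triK c N * NormedSpace.exp ((r : ℂ) • h')) :
    Matrix.trace ((x * triK c N - triK c N * x) * (x * triK c N - triK c N * x)) =
      ((-8 * Real.sin (a * r) ^ 2 : ℝ) : ℂ) *
        ((∑ j ∈ Finset.Icc 1 (N - 1), ((‖c j‖ ^ 4 : ℝ) : ℂ)) +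
          ∑ j ∈ Finset.Icc 1 (N - 2),
            ((‖c j‖ ^ 2 * ‖c (j + 1)‖ ^ 2 *
              ((1 - 3 * ε j * ε (j + 1)) / 2) : ℝ) : ℂ)) := by
  subst hx hh'
  rw [exp_diagonal_conj_triK, trace_sq_triK_phase_commutator c _ (fun k => r * (h k - h (k + 1))) N
    fun _ => rfl, ← Complex.ofReal_sum, ← Complex.ofReal_sum, ← Complex.ofReal_add,
    ← Complex.ofReal_mul]
  congr 1
  have hphase : ∀ j ∈ Icc 1 (N - 1), Real.sin (r * (h j - h (j + 1))) = ε j * Real.sin (a * r) ∧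
      Real.cos (r * (h j - h (j + 1))) = Real.cos (a * r) ∧ ε j ^ 2 = 1 := by
    intro j hj
    rw [show r * (h j - h (j + 1)) = ε j * (a * r) by rw [hdiff j hj]; ring]
    rcases hε j hj with hεj | hεj <;> simp [hεj]
  rw [mul_add, mul_sum, mul_sum, mul_sum, mul_sum]
  congr 1 <;> refine sum_congr rfl fun j hj => ?_
  · obtain ⟨hsin, -, hsq⟩ := hphase j hj
    rw [hsin]
    linear_combination (-8 * ‖c j‖ ^ 4 * Real.sin (a * r) ^ 2) * hsq
  · have hj' : j ∈ Icc 1 (N - 1) := by simp only [mem_Icc] at hj ⊢; omega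
    have hj₁ : j + 1 ∈ Icc 1 (N - 1) := by simp only [mem_Icc] at hj ⊢; omega
    obtain ⟨hsin, hcos, -⟩ := hphase j hj'
    obtain ⟨hsin₁, hcos₁, -⟩ := hphase (j + 1) hj₁
    rw [Real.cos_sub, hsin, hcos, hsin₁, hcos₁]
    linear_combination 4 * ‖c j‖ ^ 2 * ‖c (j + 1)‖ ^ 2 * Real.sin_sq_add_cos_sq (a * r)

/-- For `h' = diag(ih₁,…,ih_N)` with `h_j - h_{j+1} = ε_j a` (`ε_j = ±1`, `a > 0`)
and `x = e^{-h'r} k e^{h'r}`, one has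
`Tr([x,k]²) = -8 sin²(ar)(∑ |c_j|⁴ + ∑ |c_j|²|c_{j+1}|²(1-3ε_jε_{j+1})/2)`. -/
theorem trace_comm_x_k_sq (N : ℕ) (hN : 2 ≤ N) (a r : ℝ) (ha : 0 < a)
    (h : ℕ → ℝ) (ε : ℕ → ℝ) (c : ℕ → ℂ)
    (hε : ∀ j ∈ Finset.Icc 1 (N - 1), ε j = 1 ∨ ε j = -1)
    (hdiff : ∀ j ∈ Finset.Icc 1 (N - 1), h j - h (j + 1) = ε j * a)
    (h' x : Matrix (Fin N) (Fin N) ℂ)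
    (hh' : h' = Matrix.diagonal (fun i : Fin N => ((h ((i : ℕ) + 1) : ℝ) : ℂ) * Complex.I))
    (hx : x = NormedSpace.exp (-(r : ℂ) • h') * triK c N * NormedSpace.exp ((r : ℂ) • h')) :
    Matrix.trace ((x * triK c N - triK c N * x) * (x * triK c N - triK c N * x)) =
      ((-8 * Real.sin (a * r) ^ 2 : ℝ) : ℂ) *
        ((∑ j ∈ Finset.Icc 1 (N - 1), ((‖c j‖ ^ 4 : ℝ) : ℂ)) +
          ∑ j ∈ Finset.Icc 1 (N - 2),
            ((‖c j‖ ^ 2 * ‖c (j + 1)‖ ^ 2 *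
              ((1 - 3 * ε j * ε (j + 1)) / 2) : ℝ) : ℂ)) :=
  trace_comm_x_k_sq_general N a r h ε c hε hdiff h' x hh' hx
end

section
/- If a 4×4 complex matrix k satisfies k⁴ = -(p²+q²)k² - p²q²·I with p > q > 0, then e^{xk} = f_0(x)I + f_1(x)k + f_2(x)k² + f_3(x)k³, where f_0(x) = (p²cos(qx) - q²cos(px))/(p²-q²), f_1(x) = (p²sin(qx)/q - q²sin(px)/p)/(p²-q²), f_2(x) = (cos(qx)-cos(px))/(p²-q²), f_3(x) = (sin(qx)/q - sin(px)/p)/(p²-q²). -/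
/-!
The coefficients satisfy `f₀' = -p²q² f₃`, `f₁' = f₀`, `f₂' = f₁ - (p²+q²) f₃`, `f₃' = f₂`,
which together with `k⁴ = -(p²+q²)k² - p²q²` say exactly that `F(x) = f₀ + f₁k + f₂k² + f₃k³`
solves `F' = F k`. Since also `F(0) = 1`, the product `F(x) e^{-xk}` is constant equal to `1`.
-/

open NormedSpace in
theorem eq_exp_smul_of_hasDerivAt_eq_mul {A : Type*} [NormedRing A] [NormedAlgebra ℝ A]
    [CompleteSpace A] {a : A} {F : ℝ → A} (hF : ∀ t, HasDerivAt F (F t * a) t) (hF0 : F 0 = 1)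
    (t : ℝ) : F t = exp (t • a) := by
  have hG : ∀ s, HasDerivAt (fun s : ℝ ↦ F s * exp (s • -a)) 0 s := fun s ↦
    ((hF s).mul (hasDerivAt_exp_smul_const' (-a) s)).congr_deriv (by simp [mul_assoc])
  have hGt : F t * exp (t • -a) = 1 := by
    rw [is_const_of_deriv_eq_zero (fun s ↦ (hG s).differentiableAt) (fun s ↦ (hG s).deriv) t 0]
    simp [hF0]
  have hcomm : Commute (t • -a) (t • a) := ((Commute.refl a).neg_left.smul_left t).smul_right t
  have hball (x : A) : x ∈ Metric.eball 0 (expSeries ℝ A).radius := by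
    simp [expSeries_radius_eq_top]
  calc F t = F t * (exp (t • -a) * exp (t • a)) := by
        rw [← exp_add_of_commute_of_mem_ball hcomm (hball _) (hball _), smul_neg, neg_add_cancel,
          exp_zero, mul_one]
    _ = exp (t • a) := by rw [← mul_assoc, hGt, one_mul]

theorem hasDerivAt_cubic_smul_pow_eq_mul {A : Type*} [NormedRing A] [NormedAlgebra ℝ A] {k : A}
    {s P : ℝ} (hk : k ^ 4 = -s • k ^ 2 - P • 1) {c₀ c₁ c₂ c₃ : ℝ → ℝ} {t : ℝ}
    (h₀ : HasDerivAt c₀ (-P * c₃ t) t) (h₁ : HasDerivAt c₁ (c₀ t) t)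
    (h₂ : HasDerivAt c₂ (c₁ t - s * c₃ t) t) (h₃ : HasDerivAt c₃ (c₂ t) t) :
    HasDerivAt (fun x ↦ c₀ x • 1 + c₁ x • k + c₂ x • k ^ 2 + c₃ x • k ^ 3)
      ((c₀ t • 1 + c₁ t • k + c₂ t • k ^ 2 + c₃ t • k ^ 3) * k) t := by
  refine ((((h₀.smul_const 1).add (h₁.smul_const k)).add (h₂.smul_const (k ^ 2))).add
    (h₃.smul_const (k ^ 3))).congr_deriv ?_
  simp only [add_mul, smul_mul_assoc, one_mul, ← sq, ← pow_succ, hk]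
  match_scalars <;> ring

noncomputable section

open Real

theorem hasDerivAt_cos_const_mul (a t : ℝ) :
    HasDerivAt (fun s ↦ cos (a * s)) (-a * sin (a * t)) t := by
  simpa [mul_comm] using (hasDerivAt_mul_const a).cos (x := t)

theorem hasDerivAt_sin_const_mul (a t : ℝ) :
    HasDerivAt (fun s ↦ sin (a * s)) (a * cos (a * t)) t := by
  simpa [mul_comm] using (hasDerivAt_mul_const a).sin (x := t)

def expCoeff₀ (p q x : ℝ) : ℝ :=
  (p ^ 2 * cos (q * x) - q ^ 2 * cos (p * x)) / (p ^ 2 - q ^ 2)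

def expCoeff₁ (p q x : ℝ) : ℝ :=
  (p ^ 2 * sin (q * x) / q - q ^ 2 * sin (p * x) / p) / (p ^ 2 - q ^ 2)

def expCoeff₂ (p q x : ℝ) : ℝ :=
  (cos (q * x) - cos (p * x)) / (p ^ 2 - q ^ 2)

def expCoeff₃ (p q x : ℝ) : ℝ :=
  (sin (q * x) / q - sin (p * x) / p) / (p ^ 2 - q ^ 2)

variable {p q : ℝ} (t : ℝ)

theorem hasDerivAt_expCoeff₀ (hp : p ≠ 0) (hq : q ≠ 0) :
    HasDerivAt (expCoeff₀ p q) (-(p ^ 2 * q ^ 2) * expCoeff₃ p q t) t :=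
  ((((hasDerivAt_cos_const_mul q t).const_mul (p ^ 2)).sub
    ((hasDerivAt_cos_const_mul p t).const_mul (q ^ 2))).div_const _).congr_deriv <| by
      unfold expCoeff₃; field_simp; ring

theorem hasDerivAt_expCoeff₁ (hp : p ≠ 0) (hq : q ≠ 0) :
    HasDerivAt (expCoeff₁ p q) (expCoeff₀ p q t) t :=
  (((((hasDerivAt_sin_const_mul q t).const_mul (p ^ 2)).div_const q).sub
    (((hasDerivAt_sin_const_mul p t).const_mul (q ^ 2)).div_const p)).div_const _).congr_deriv <| by
      unfold expCoeff₀; field_simp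

theorem hasDerivAt_expCoeff₂ (hp : p ≠ 0) (hq : q ≠ 0) :
    HasDerivAt (expCoeff₂ p q) (expCoeff₁ p q t - (p ^ 2 + q ^ 2) * expCoeff₃ p q t) t :=
  (((hasDerivAt_cos_const_mul q t).sub (hasDerivAt_cos_const_mul p t)).div_const _).congr_deriv
    <| by unfold expCoeff₁ expCoeff₃; field_simp; ring

theorem hasDerivAt_expCoeff₃ (hp : p ≠ 0) (hq : q ≠ 0) :
    HasDerivAt (expCoeff₃ p q) (expCoeff₂ p q t) t :=
  ((((hasDerivAt_sin_const_mul q t).div_const q).sub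
    ((hasDerivAt_sin_const_mul p t).div_const p)).div_const _).congr_deriv <| by
      unfold expCoeff₂; field_simp

theorem expCoeff₀_zero (h : p ^ 2 ≠ q ^ 2) : expCoeff₀ p q 0 = 1 := by
  simp [expCoeff₀, div_self (sub_ne_zero.mpr h)]

end

attribute [local instance] Matrix.linftyOpNormedAddCommGroup Matrix.linftyOpNormedRing
  Matrix.linftyOpNormedAlgebra

/-- If a 4×4 complex matrix satisfies `k⁴ = -(p²+q²)k² - p²q²·I` with
`p > q > 0`, then `e^{xk} = f₀(x)I + f₁(x)k + f₂(x)k² + f₃(x)k³` with the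
explicit trigonometric coefficients. -/
theorem exp_su4_k (p q : ℝ) (hq : 0 < q) (hpq : q < p)
    (k : Matrix (Fin 4) (Fin 4) ℂ)
    (hk : k ^ 4 = -(((p ^ 2 + q ^ 2 : ℝ) : ℂ)) • k ^ 2 - ((p ^ 2 * q ^ 2 : ℝ) : ℂ) • 1) :
    ∀ x : ℝ, NormedSpace.exp ((x : ℂ) • k) =
      (((p ^ 2 * Real.cos (q * x) - q ^ 2 * Real.cos (p * x)) / (p ^ 2 - q ^ 2) : ℝ) : ℂ) • 1 +
      (((p ^ 2 * Real.sin (q * x) / q - q ^ 2 * Real.sin (p * x) / p) / (p ^ 2 - q ^ 2) : ℝ) : ℂ) • k +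
      (((Real.cos (q * x) - Real.cos (p * x)) / (p ^ 2 - q ^ 2) : ℝ) : ℂ) • k ^ 2 +
      (((Real.sin (q * x) / q - Real.sin (p * x) / p) / (p ^ 2 - q ^ 2) : ℝ) : ℂ) • k ^ 3 := by
  have hp : p ≠ 0 := (hq.trans hpq).ne'
  have hpq₂ : p ^ 2 ≠ q ^ 2 := (pow_lt_pow_left₀ hpq hq.le two_ne_zero).ne'
  intro x
  simp only [← Complex.ofReal_neg, Complex.coe_smul] at hk ⊢
  refine (eq_exp_smul_of_hasDerivAt_eq_mul (fun t ↦ hasDerivAt_cubic_smul_pow_eq_mul hk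
    (hasDerivAt_expCoeff₀ t hp hq.ne') (hasDerivAt_expCoeff₁ t hp hq.ne')
    (hasDerivAt_expCoeff₂ t hp hq.ne') (hasDerivAt_expCoeff₃ t hp hq.ne')) ?_ x).symm
  simp [expCoeff₀_zero hpq₂, expCoeff₁, expCoeff₂, expCoeff₃]
end

section
/- For positive reals A, B, C, M, α, β, D, the function g(x,y,z) = D·(A²x + B²y + C²xy + z(1 + α²x + β²y))/√(xyz) of positive variables x, y, z (corresponding to g(L_φ,L_r,L_γ) with x = 1/L_φ², y = 1/L_r², z = M²/L_γ²) has a unique stationary point in the positive octant at x = B/(αC), y = A/(βC), z = AB/(αβ). -/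
/-! Along each coordinate, `g` has the form `D(ct + q)/√(tw)` with `c, q, w` independent of `t`,
whose derivative is `D(ct - q)/(2t√(tw))`; so stationarity means `ct = q` in each variable.
Sums and differences of these three equations give `z = C²xy`, `α²xz = B²y`, `β²yz = A²x`;
substituting the first into the other two leaves `(αCx)² = B²` and `(βCy)² = A²`, whose positive
roots are the claimed point. -/

open Real

lemma hasDerivAt_affine_div_sqrt_mul {c q w t : ℝ} (hw : 0 < w) (ht : 0 < t) :
    HasDerivAt (fun s => (c * s + q) / √(s * w)) ((c * t - q) / (2 * t * √(t * w))) t := by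
  have htw : 0 < t * w := mul_pos ht hw
  have hsqrt : 0 < √(t * w) := sqrt_pos.mpr htw
  have hnum : HasDerivAt (fun s => c * s + q) c t := by
    simpa using ((hasDerivAt_id t).const_mul c).add_const q
  have hden : HasDerivAt (fun s => √(s * w)) (w / (2 * √(t * w))) t := by
    simpa [div_eq_inv_mul, mul_comm] using ((hasDerivAt_id t).mul_const w).sqrt htw.ne'
  refine (hnum.div hden hsqrt.ne').congr_deriv ?_
  rw [sq_sqrt htw.le]
  field_simp
  rw [sq_sqrt htw.le]
  ring

lemma hasDerivAt_zero_iff_of_affine_div_sqrt_mul {f : ℝ → ℝ} {D c q w t : ℝ} (hD : D ≠ 0)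
    (hw : 0 < w) (ht : 0 < t) (hf : ∀ s, f s = D * (c * s + q) / √(s * w)) :
    HasDerivAt f 0 t ↔ c * t = q := by
  have hf' : f = fun s => D * ((c * s + q) / √(s * w)) := funext fun s => by
    rw [hf, mul_div_assoc]
  have hderiv := (hasDerivAt_affine_div_sqrt_mul (c := c) (q := q) hw ht).const_mul D
  rw [← hf'] at hderiv
  have hden : 2 * t * √(t * w) ≠ 0 := by positivity
  have hcrit : D * ((c * t - q) / (2 * t * √(t * w))) = 0 ↔ c * t = q := by
    simp only [mul_eq_zero, div_eq_zero_iff, sub_eq_zero, hD, hden, false_or, or_false]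
  exact ⟨fun h => hcrit.mp (h.unique hderiv).symm, fun h => hcrit.mpr h ▸ hderiv⟩

section StationarySystem

variable {A B C α β x y z : ℝ}

lemma stationary_system_iff_reduced :
    ((A ^ 2 + C ^ 2 * y + α ^ 2 * z) * x = B ^ 2 * y + z * (1 + β ^ 2 * y) ∧
      (B ^ 2 + C ^ 2 * x + β ^ 2 * z) * y = A ^ 2 * x + z * (1 + α ^ 2 * x) ∧
      (1 + α ^ 2 * x + β ^ 2 * y) * z = A ^ 2 * x + B ^ 2 * y + C ^ 2 * x * y) ↔
    (z = C ^ 2 * x * y ∧ α ^ 2 * x * z = B ^ 2 * y ∧ β ^ 2 * y * z = A ^ 2 * x) := by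
  constructor
  · rintro ⟨e₁, e₂, e₃⟩
    exact ⟨by linear_combination (-e₁ - e₂) / 2, by linear_combination (e₁ + e₃) / 2,
      by linear_combination (e₂ + e₃) / 2⟩
  · rintro ⟨h₁, h₂, h₃⟩
    exact ⟨by linear_combination h₂ - h₁ - h₃, by linear_combination h₃ - h₁ - h₂,
      by linear_combination h₁ + h₂ + h₃⟩

lemma reduced_system_iff (hA : 0 < A) (hB : 0 < B) (hC : 0 < C) (hα : 0 < α) (hβ : 0 < β)
    (hx : 0 < x) (hy : 0 < y) :
    (z = C ^ 2 * x * y ∧ α ^ 2 * x * z = B ^ 2 * y ∧ β ^ 2 * y * z = A ^ 2 * x) ↔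
    (x = B / (α * C) ∧ y = A / (β * C) ∧ z = A * B / (α * β)) := by
  constructor
  · rintro ⟨hz, h₂, h₃⟩
    have hαx : α * C * x = B := by
      refine (sq_eq_sq₀ (by positivity) hB.le).mp (mul_right_cancel₀ hy.ne' ?_)
      linear_combination h₂ - α ^ 2 * x * hz
    have hβy : β * C * y = A := by
      refine (sq_eq_sq₀ (by positivity) hA.le).mp (mul_right_cancel₀ hx.ne' ?_)
      linear_combination h₃ - β ^ 2 * y * hz
    have hx' : x = B / (α * C) := by rw [eq_div_iff (by positivity), ← hαx]; ring
    have hy' : y = A / (β * C) := by rw [eq_div_iff (by positivity), ← hβy]; ring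
    refine ⟨hx', hy', ?_⟩
    rw [hz, hx', hy']
    field_simp
  · rintro ⟨rfl, rfl, rfl⟩
    refine ⟨?_, ?_, ?_⟩ <;> field_simp

end StationarySystem

theorem unique_stationary_point_general (A B C α β D : ℝ)
    (hA : 0 < A) (hB : 0 < B) (hC : 0 < C)
    (hα : 0 < α) (hβ : 0 < β) (hD : 0 < D)
    (g : ℝ → ℝ → ℝ → ℝ)
    (hg : ∀ x y z, g x y z =
      D * (A ^ 2 * x + B ^ 2 * y + C ^ 2 * x * y + z * (1 + α ^ 2 * x + β ^ 2 * y)) /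
        Real.sqrt (x * y * z)) :
    ∀ x y z : ℝ, 0 < x → 0 < y → 0 < z →
      ((HasDerivAt (fun t => g t y z) 0 x ∧
        HasDerivAt (fun t => g x t z) 0 y ∧
        HasDerivAt (fun t => g x y t) 0 z) ↔
      (x = B / (α * C) ∧ y = A / (β * C) ∧ z = A * B / (α * β))) := by
  intro x y z hx hy hz
  rw [hasDerivAt_zero_iff_of_affine_div_sqrt_mul hD.ne' (mul_pos hy hz) hx
      (c := A ^ 2 + C ^ 2 * y + α ^ 2 * z) (q := B ^ 2 * y + z * (1 + β ^ 2 * y))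
      fun t => by rw [hg]; ring_nf,
    hasDerivAt_zero_iff_of_affine_div_sqrt_mul hD.ne' (mul_pos hx hz) hy
      (c := B ^ 2 + C ^ 2 * x + β ^ 2 * z) (q := A ^ 2 * x + z * (1 + α ^ 2 * x))
      fun t => by rw [hg]; ring_nf,
    hasDerivAt_zero_iff_of_affine_div_sqrt_mul hD.ne' (mul_pos hx hy) hz
      (c := 1 + α ^ 2 * x + β ^ 2 * y) (q := A ^ 2 * x + B ^ 2 * y + C ^ 2 * x * y)
      fun t => by rw [hg]; ring_nf,
    stationary_system_iff_reduced]
  exact reduced_system_iff hA hB hC hα hβ hx hy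

/-- For positive constants `A, B, C, M, α, β, D`, the function
`g(x,y,z) = D(A²x + B²y + C²xy + z(1 + α²x + β²y))/√(xyz)` of positive
variables has a unique stationary point in the positive octant, located at
`x = B/(αC)`, `y = A/(βC)`, `z = AB/(αβ)`. -/
theorem unique_stationary_point (A B C M α β D : ℝ)
    (hA : 0 < A) (hB : 0 < B) (hC : 0 < C) (hM : 0 < M)
    (hα : 0 < α) (hβ : 0 < β) (hD : 0 < D)
    (g : ℝ → ℝ → ℝ → ℝ)
    (hg : ∀ x y z, g x y z =
      D * (A ^ 2 * x + B ^ 2 * y + C ^ 2 * x * y + z * (1 + α ^ 2 * x + β ^ 2 * y)) /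
        Real.sqrt (x * y * z)) :
    ∀ x y z : ℝ, 0 < x → 0 < y → 0 < z →
      ((HasDerivAt (fun t => g t y z) 0 x ∧
        HasDerivAt (fun t => g x t z) 0 y ∧
        HasDerivAt (fun t => g x y t) 0 z) ↔
      (x = B / (α * C) ∧ y = A / (β * C) ∧ z = A * B / (α * β))) :=
  unique_stationary_point_general A B C α β D hA hB hC hα hβ hD g hg
end
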